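/- arXiv:2411.05654 — 2 statements merged into one kernel-verified Lean document; each statement's English description precedes it below -/
import Mathlib

section
/- For natural numbers m, u with u ≥ 1 and any integer k with 0 ≤ k < m, the polynomial h_{1,m,u}(x; y) vanishes at (x, y) = (-k - 1/2, -m + k + 1/2), i.e., h_{1,m,u}(-k-1/2; -m+k+1/2) = 0. -/
open Finset

/-- Generalized binomial coefficient C(α, n) = α(α-1)⋯(α-n+1)/n!. -/
noncomputable def gchoose {K : Type*} [Field K] (α : K) (n : ℕ) : K :=
  (∏ i ∈ Finset.range n, (α - i)) / (n.factorial : K)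

/-- Rising factorial (a)↑_c = a(a+1)⋯(a+c-1). -/
def asc {R : Type*} [CommRing R] (a : R) (c : ℕ) : R :=
  ∏ i ∈ Finset.range c, (a + i)

/-- Falling factorial (a)↓_c = a(a-1)⋯(a-c+1). -/
def desc {R : Type*} [CommRing R] (a : R) (c : ℕ) : R :=
  ∏ i ∈ Finset.range c, (a - i)

/-- P(a,b) = (a+b)(a+b-1)⋯(a-b), a product of 2b+1 consecutive terms. -/
def PP {R : Type*} [CommRing R] (a : R) (b : ℕ) : R :=
  ∏ j ∈ Finset.range (2*b+1), (a + (b : R) - j)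

/-- The polynomial ∏_{j=lo}^{hi} (y² - (v+j)²), i.e. P(y, v+hi)/P(y, v+lo-1). -/
def Pratio {R : Type*} [CommRing R] (y : R) (v lo hi : ℕ) : R :=
  ∏ j ∈ Finset.Icc lo hi, (y^2 - ((v + j : ℕ) : R)^2)

/-- h_{1,m,u}(x;y). -/
noncomputable def h1 {R : Type*} [CommRing R] [Algebra ℚ R] (m u : ℕ) (x y : R) : R :=
  ∑ s ∈ Finset.range (m+1),
    algebraMap ℚ R ((-1)^s * (m.choose s : ℚ) / gchoose ((m : ℚ) + u + s + 1/2) (m+1))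
      * PP x (m + u + s) * Pratio y u (s+1) m

/-- h_{ℓ,m,u}(x; y₁,…,y_ℓ). -/
noncomputable def hgen {R : Type*} [CommRing R] [Algebra ℚ R] (ℓ m u : ℕ)
    (x : R) (y : Fin ℓ → R) : R :=
  ∑ s ∈ Fintype.piFinset (fun _ : Fin ℓ => Finset.range (m+1)),
    (fun S : ℕ → ℕ =>
      algebraMap ℚ R ((-1)^(S ℓ) / gchoose ((m : ℚ) + u + S ℓ + 1/2) (m+1))
        * PP x (m + u + S ℓ)
        * ∏ i : Fin ℓ,
            (algebraMap ℚ R (m.choose (s i) : ℚ)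
              * Pratio (y i) u (S ((i : ℕ) + 1) + 1) (m + S (i : ℕ))))
    (fun k => ∑ i ∈ Finset.univ.filter (fun i : Fin ℓ => (i : ℕ) < k), s i)

/-- Φ_{m,k,v}(y,z), with the convention that C(m, k-t) = 0 when t > k. -/
def Phi {R : Type*} [CommRing R] (m k v : ℕ) (y z : R) : R :=
  ∑ t ∈ Finset.range (m+1),
    ((m.choose t : R) * (if t ≤ k then (m.choose (k - t) : R) else 0))
      * Pratio y v (t+1) m * Pratio z v (k+1) (m+t)


section statement4aux
open Polynomial

private lemma half_ne' (z : ℤ) : (z:ℚ) + 1/2 ≠ 0 := by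
  intro h
  have h2 : ((2*z+1 : ℤ):ℚ) = ((0:ℤ):ℚ) := by push_cast; linarith
  have := Int.cast_injective h2
  omega

private lemma tele' (c s : ℚ) : ∀ L : ℕ,
    (∏ i ∈ Finset.range L, (s + 1 + c - i)) * (s + c + 1 - L)
    = (∏ i ∈ Finset.range L, (s + c - i)) * (s + c + 1) := by
  intro L
  induction L with
  | zero => simp
  | succ L ih =>
    rw [prod_range_succ, prod_range_succ]
    push_cast
    have h2 : (∏ i ∈ Finset.range L, (s + 1 + c - i)) * (s + c + 1 - L) * (s + c - L)
        = (∏ i ∈ Finset.range L, (s + c - i)) * (s + c + 1) * (s + c - L) := by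
      rw [ih]
    linear_combination h2

/-- G c len s = ∏_{i<len} (s + c - i). -/
private def G (c : ℚ) (len s : ℕ) : ℚ := ∏ i ∈ Finset.range len, ((s:ℚ) + c - i)

private lemma G_succ (c : ℚ) (len s : ℕ) :
    G c len (s+1) * ((s:ℚ) + c + 1 - (len:ℚ)) = G c len s * ((s:ℚ) + c + 1) := by
  rw [G, G]
  rw [Finset.prod_congr rfl (fun i _ => by push_cast; ring :
    ∀ i ∈ Finset.range len, (((s+1:ℕ):ℚ) + c - i) = ((s:ℚ) + 1 + c - i))]
  exact tele' c s len

private lemma G_ne_half (a : ℤ) (len s : ℕ) : G ((a:ℚ)+1/2) len s ≠ 0 := by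
  rw [G]
  refine Finset.prod_ne_zero_iff.mpr fun i _ => ?_
  have h : (s:ℚ) + ((a:ℚ)+1/2) - i = (((s:ℤ) + a - i : ℤ):ℚ) + 1/2 := by push_cast; ring
  rw [h]; exact half_ne' _

private lemma PP_succ (a : ℚ) (b : ℕ) :
    PP a (b+1) = (a + ((b:ℚ)+1)) * PP a b * (a - ((b:ℚ)+1)) := by
  have h : 2*(b+1)+1 = (2*b+1+1)+1 := by ring
  rw [PP, h, Finset.prod_range_succ', Finset.prod_range_succ]
  rw [PP]
  rw [Finset.prod_congr rfl (fun j _ => by push_cast; ring :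
    ∀ j ∈ Finset.range (2*b+1), (a + ((b+1:ℕ):ℚ) - ((j+1:ℕ):ℚ)) = a + (b:ℚ) - j)]
  push_cast
  ring

private lemma Pratio_cons (y : ℚ) (v lo hi : ℕ) (h : lo ≤ hi) :
    Pratio y v lo hi = (y^2 - ((v + lo : ℕ) : ℚ)^2) * Pratio y v (lo+1) hi := by
  rw [Pratio, Pratio, Finset.Icc_eq_cons_Ioc h, Finset.prod_cons, ← Finset.Icc_add_one_left_eq_Ioc]

private lemma altsum' : ∀ (n : ℕ) (Q : ℚ[X]), Q.natDegree < n →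
    ∑ s ∈ Finset.range (n+1), (-1:ℚ)^s * (n.choose s : ℚ) * Q.eval (s:ℚ) = 0 := by
  intro n
  induction n with
  | zero => intro Q h; omega
  | succ n ih =>
    intro Q hQ
    rcases Nat.eq_zero_or_pos n with hn | hn
    · subst hn
      have h0 : Q.natDegree = 0 := by omega
      obtain ⟨a, rfl⟩ := Polynomial.natDegree_eq_zero.mp h0
      simp [Finset.sum_range_succ]
    · set ΔQ : ℚ[X] := Q.comp (X + C 1) - Q with hΔdef
      have hΔdeg : ΔQ.natDegree < n := by
        rcases eq_or_ne Q 0 with rfl | hQ0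
        · simp [hΔdef]; omega
        rcases Nat.eq_zero_or_pos Q.natDegree with hd0 | hdpos
        · obtain ⟨a, ha⟩ := Polynomial.natDegree_eq_zero.mp hd0
          have : ΔQ = 0 := by rw [hΔdef, ← ha]; simp [← ha]
          simp [this]; omega
        · have hX1 : (X + C 1 : ℚ[X]).natDegree = 1 := natDegree_X_add_C 1
          have hcomp0 : Q.comp (X + C 1) ≠ 0 := by
            intro h
            have := Polynomial.leadingCoeff_comp (p := Q) (q := X + C 1) (by rw [hX1]; omega)
            rw [h, leadingCoeff_X_add_C] at this
            simp only [Polynomial.leadingCoeff_zero, one_pow, mul_one] at this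
            exact hQ0 (Polynomial.leadingCoeff_eq_zero.mp this.symm)
          have hdeq : (Q.comp (X + C 1)).degree = Q.degree := by
            rw [Polynomial.degree_eq_natDegree hcomp0, Polynomial.degree_eq_natDegree hQ0,
              Polynomial.natDegree_comp, hX1, mul_one]
          have hlc : (Q.comp (X + C 1)).leadingCoeff = Q.leadingCoeff := by
            rw [Polynomial.leadingCoeff_comp (by rw [hX1]; omega), leadingCoeff_X_add_C]
            simp
          have hlt := Polynomial.degree_sub_lt hdeq hcomp0 hlc
          rw [hdeq] at hlt
          rcases eq_or_ne ΔQ 0 with h0 | h0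
          · rw [h0]; simpa using by omega
          · have := Polynomial.natDegree_lt_natDegree h0 hlt
            omega
      have hIH := ih ΔQ hΔdeg
      have hev : ∀ s : ℕ, ΔQ.eval (s:ℚ) = Q.eval ((s:ℚ)+1) - Q.eval (s:ℚ) := by
        intro s
        simp [hΔdef, Polynomial.eval_comp]
      have key : ∑ s ∈ Finset.range (n+2), (-1:ℚ)^s * ((n+1).choose s : ℚ) * Q.eval (s:ℚ)
          = - ∑ s ∈ Finset.range (n+1), (-1:ℚ)^s * (n.choose s : ℚ) * ΔQ.eval (s:ℚ) := by
        rw [Finset.sum_range_succ' (fun s => (-1:ℚ)^s * ((n+1).choose s : ℚ) * Q.eval (s:ℚ)) (n+1)]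
        have hsplit : ∀ s : ℕ, (-1:ℚ)^(s+1) * ((n+1).choose (s+1) : ℚ) * Q.eval ((s+1:ℕ):ℚ)
            = (-1:ℚ)^(s+1) * (n.choose s : ℚ) * Q.eval ((s+1:ℕ):ℚ)
              + (-1:ℚ)^(s+1) * (n.choose (s+1) : ℚ) * Q.eval ((s+1:ℕ):ℚ) := by
          intro s
          rw [Nat.choose_succ_succ]
          push_cast
          ring
        rw [Finset.sum_congr rfl (fun s _ => hsplit s), Finset.sum_add_distrib]
        have h2 : ∑ s ∈ Finset.range (n+1), (-1:ℚ)^(s+1) * (n.choose (s+1) : ℚ) * Q.eval ((s+1:ℕ):ℚ)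
            = ∑ s ∈ Finset.range (n+2), (-1:ℚ)^s * (n.choose s : ℚ) * Q.eval (s:ℚ)
              - (-1:ℚ)^0 * (n.choose 0 : ℚ) * Q.eval ((0:ℕ):ℚ) := by
          rw [Finset.sum_range_succ' (fun s => (-1:ℚ)^s * (n.choose s : ℚ) * Q.eval (s:ℚ)) (n+1)]
          ring
        rw [h2]
        have h3 : ∑ s ∈ Finset.range (n+2), (-1:ℚ)^s * (n.choose s : ℚ) * Q.eval (s:ℚ)
            = ∑ s ∈ Finset.range (n+1), (-1:ℚ)^s * (n.choose s : ℚ) * Q.eval (s:ℚ) := by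
          rw [Finset.sum_range_succ]
          simp [Nat.choose_succ_self]
        have h4 : ∑ s ∈ Finset.range (n+1), (-1:ℚ)^s * (n.choose s : ℚ) * ΔQ.eval (s:ℚ)
            = (∑ s ∈ Finset.range (n+1), (-1:ℚ)^s * (n.choose s : ℚ) * Q.eval ((s:ℚ)+1))
              - ∑ s ∈ Finset.range (n+1), (-1:ℚ)^s * (n.choose s : ℚ) * Q.eval (s:ℚ) := by
          rw [← Finset.sum_sub_distrib]
          exact Finset.sum_congr rfl (fun s _ => by rw [hev s]; ring)
        rw [h3, h4]
        have h5 : ∑ x ∈ Finset.range (n+1), (-1:ℚ)^(x+1) * (n.choose x : ℚ) * Q.eval ((x+1:ℕ):ℚ)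
            = - ∑ x ∈ Finset.range (n+1), (-1:ℚ)^x * (n.choose x : ℚ) * Q.eval ((x:ℚ)+1) := by
          rw [← Finset.sum_neg_distrib]
          exact Finset.sum_congr rfl (fun x _ => by push_cast; ring)
        rw [h5]
        simp
        ring
      rw [key, hIH, neg_zero]

private lemma main_ind (m u k : ℕ) (hk : k < m) :
    ∀ s, s ≤ m →
    (PP (-(k:ℚ) - 1/2) (m+u+s) * Pratio (-(m:ℚ) + k + 1/2) u (s+1) m)
      * (G ((m:ℚ)+(u:ℚ)+1/2) (m+1) 0 * (G ((k:ℚ)+(m:ℚ)+(u:ℚ)+1/2) k 0 * G ((u:ℚ)-1/2) (m-1-k) 0))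
    = (PP (-(k:ℚ) - 1/2) (m+u) * Pratio (-(m:ℚ) + k + 1/2) u 1 m)
      * (G ((m:ℚ)+(u:ℚ)+1/2) (m+1) s * (G ((k:ℚ)+(m:ℚ)+(u:ℚ)+1/2) k s * G ((u:ℚ)-1/2) (m-1-k) s)) := by
  have hL : ((m-1-k : ℕ):ℚ) = (m:ℚ) - 1 - k := by
    have h := congrArg (Nat.cast : ℕ → ℚ) (show (m-1-k) + (k+1) = m by omega)
    push_cast at h
    linarith
  intro s
  induction s with
  | zero =>
    norm_num
  | succ s ih =>
    intro hs1
    have ih' := ih (by omega)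
    have hPP := PP_succ (-(k:ℚ) - 1/2) (m+u+s)
    push_cast at hPP
    have hPr := Pratio_cons (-(m:ℚ) + k + 1/2) u (s+1) m hs1
    push_cast at hPr
    rw [hPr] at ih'
    have hED := G_succ ((m:ℚ)+(u:ℚ)+1/2) (m+1) s
    push_cast at hED
    have hE1 := G_succ ((k:ℚ)+(m:ℚ)+(u:ℚ)+1/2) k s
    have hE2 := G_succ ((u:ℚ)-1/2) (m-1-k) s
    rw [hL] at hE2
    have hβ : ((-(m:ℚ)+k+1/2)^2 - ((u:ℚ)+((s:ℚ)+1))^2)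
        = (((((k:ℤ)-m-u-s-1) : ℤ):ℚ)+1/2) * (((((k:ℤ)-m+u+s+1) : ℤ):ℚ)+1/2) := by
      push_cast; ring
    have hT : (((-(m:ℚ)+k+1/2)^2 - ((u:ℚ)+((s:ℚ)+1))^2)
        * (((s:ℚ)+(u:ℚ)+1/2) * (((s:ℚ)+(m:ℚ)+(u:ℚ)+3/2) * ((s:ℚ)+(u:ℚ)+(k:ℚ)+3/2-(m:ℚ))))) ≠ 0 := by
      refine mul_ne_zero ?_ (mul_ne_zero ?_ (mul_ne_zero ?_ ?_))
      · rw [hβ]; exact mul_ne_zero (half_ne' _) (half_ne' _)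
      · have h : (s:ℚ)+(u:ℚ)+1/2 = (((s:ℤ)+u : ℤ):ℚ)+1/2 := by push_cast; ring
        rw [h]; exact half_ne' _
      · have h : (s:ℚ)+(m:ℚ)+(u:ℚ)+3/2 = (((s:ℤ)+m+u+1 : ℤ):ℚ)+1/2 := by push_cast; ring
        rw [h]; exact half_ne' _
      · have h : (s:ℚ)+(u:ℚ)+(k:ℚ)+3/2-(m:ℚ) = (((s:ℤ)+u+k+1-m : ℤ):ℚ)+1/2 := by push_cast; ring
        rw [h]; exact half_ne' _
    apply mul_right_cancel₀ hT
    rw [show m+u+(s+1) = (m+u+s)+1 from rfl, hPP]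
    simp only [show s+1+1 = s+2 from rfl]
    linear_combination
      (((-(k:ℚ)-1/2) + ((m:ℚ)+(u:ℚ)+(s:ℚ)+1)) * ((-(k:ℚ)-1/2) - ((m:ℚ)+(u:ℚ)+(s:ℚ)+1))
        * ((s:ℚ)+(u:ℚ)+1/2) * ((s:ℚ)+(m:ℚ)+(u:ℚ)+3/2) * ((s:ℚ)+(u:ℚ)+(k:ℚ)+3/2-(m:ℚ))) * ih'
      - (((-(m:ℚ)+k+1/2)^2 - ((u:ℚ)+((s:ℚ)+1))^2)
          * (PP (-(k:ℚ) - 1/2) (m+u) * Pratio (-(m:ℚ) + k + 1/2) u 1 m)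
          * (G ((k:ℚ)+(m:ℚ)+(u:ℚ)+1/2) k (s+1) * ((s:ℚ)+((k:ℚ)+(m:ℚ)+(u:ℚ)+1/2)+1-(k:ℚ)))
          * (G ((u:ℚ)-1/2) (m-1-k) (s+1) * ((s:ℚ)+(u:ℚ)+(k:ℚ)+3/2-(m:ℚ)))) * hED
      - (((-(m:ℚ)+k+1/2)^2 - ((u:ℚ)+((s:ℚ)+1))^2)
          * (PP (-(k:ℚ) - 1/2) (m+u) * Pratio (-(m:ℚ) + k + 1/2) u 1 m)
          * (G ((m:ℚ)+(u:ℚ)+1/2) (m+1) s * ((s:ℚ)+((m:ℚ)+(u:ℚ)+1/2)+1))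
          * (G ((u:ℚ)-1/2) (m-1-k) (s+1) * ((s:ℚ)+(u:ℚ)+(k:ℚ)+3/2-(m:ℚ)))) * hE1
      - (((-(m:ℚ)+k+1/2)^2 - ((u:ℚ)+((s:ℚ)+1))^2)
          * (PP (-(k:ℚ) - 1/2) (m+u) * Pratio (-(m:ℚ) + k + 1/2) u 1 m)
          * (G ((m:ℚ)+(u:ℚ)+1/2) (m+1) s * ((s:ℚ)+((m:ℚ)+(u:ℚ)+1/2)+1))
          * (G ((k:ℚ)+(m:ℚ)+(u:ℚ)+1/2) k s * ((s:ℚ)+((k:ℚ)+(m:ℚ)+(u:ℚ)+1/2)+1))) * hE2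

end statement4aux

/-- vanishing of h_{1,m,u} at (-k-1/2, -m+k+1/2) for 0 ≤ k < m. -/
theorem statement4 (m u k : ℕ) (hu : 1 ≤ u) (hk : k < m) :
    h1 m u (-(k:ℚ) - 1/2) (-(m:ℚ) + k + 1/2) = 0 := by
  have main := main_ind m u k hk
  set L := m - 1 - k with hLdef
  set Q : Polynomial ℚ := (∏ i ∈ Finset.range k, (Polynomial.X + Polynomial.C (((k:ℚ)+(m:ℚ)+(u:ℚ)+1/2) - i)))
      * ∏ j ∈ Finset.range L, (Polynomial.X + Polynomial.C (((u:ℚ)-1/2) - j)) with hQdef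
  have hQ1m : (∏ i ∈ Finset.range k,
      (Polynomial.X + Polynomial.C (((k:ℚ)+(m:ℚ)+(u:ℚ)+1/2) - i))).Monic :=
    Polynomial.monic_prod_of_monic _ _ (fun i _ => Polynomial.monic_X_add_C _)
  have hQ2m : (∏ j ∈ Finset.range L,
      (Polynomial.X + Polynomial.C (((u:ℚ)-1/2) - j))).Monic :=
    Polynomial.monic_prod_of_monic _ _ (fun i _ => Polynomial.monic_X_add_C _)
  have hdeg : Q.natDegree < m := by
    rw [hQdef, hQ1m.natDegree_mul hQ2m,
      Polynomial.natDegree_prod_of_monic _ _ (fun i _ => Polynomial.monic_X_add_C _),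
      Polynomial.natDegree_prod_of_monic _ _ (fun i _ => Polynomial.monic_X_add_C _)]
    simp only [Polynomial.natDegree_X_add_C]
    rw [Finset.sum_const, Finset.sum_const]
    simp only [Finset.card_range, smul_eq_mul, mul_one]
    omega
  have hQev : ∀ s : ℕ, Q.eval (s:ℚ)
      = G ((k:ℚ)+(m:ℚ)+(u:ℚ)+1/2) k s * G ((u:ℚ)-1/2) L s := by
    intro s
    rw [hQdef, Polynomial.eval_mul, Polynomial.eval_prod, Polynomial.eval_prod, G, G]
    congr 1 <;>
      exact Finset.prod_congr rfl (fun i _ => by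
        rw [Polynomial.eval_add, Polynomial.eval_X, Polynomial.eval_C]; ring)
  have hD : ∀ s : ℕ, G ((m:ℚ)+(u:ℚ)+1/2) (m+1) s ≠ 0 := by
    intro s
    have h := G_ne_half ((m:ℤ)+u) (m+1) s
    have e : ((((m:ℤ)+u : ℤ):ℚ)+1/2) = (m:ℚ)+(u:ℚ)+1/2 := by push_cast; ring
    rwa [e] at h
  have hq1 : ∀ s : ℕ, G ((k:ℚ)+(m:ℚ)+(u:ℚ)+1/2) k s ≠ 0 := by
    intro s
    have h := G_ne_half ((k:ℤ)+m+u) k s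
    have e : ((((k:ℤ)+m+u : ℤ):ℚ)+1/2) = (k:ℚ)+(m:ℚ)+(u:ℚ)+1/2 := by push_cast; ring
    rwa [e] at h
  have hq2 : ∀ s : ℕ, G ((u:ℚ)-1/2) L s ≠ 0 := by
    intro s
    have h := G_ne_half ((u:ℤ)-1) L s
    have e : ((((u:ℤ)-1 : ℤ):ℚ)+1/2) = (u:ℚ)-1/2 := by push_cast; ring
    rwa [e] at h
  rw [h1]
  have hgc : ∀ s : ℕ, gchoose ((m : ℚ) + u + s + 1/2) (m+1)
      = G ((m:ℚ)+(u:ℚ)+1/2) (m+1) s / ((m+1).factorial : ℚ) := by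
    intro s
    rw [gchoose, G]
    congr 1
    exact Finset.prod_congr rfl (fun i _ => by ring)
  have key : ∀ s ∈ Finset.range (m+1),
      algebraMap ℚ ℚ ((-1)^s * (m.choose s : ℚ) / gchoose ((m : ℚ) + u + s + 1/2) (m+1))
        * PP (-(k:ℚ) - 1/2) (m + u + s) * Pratio (-(m:ℚ) + k + 1/2) u (s+1) m
      = (((m+1).factorial : ℚ) * (PP (-(k:ℚ) - 1/2) (m+u) * Pratio (-(m:ℚ) + k + 1/2) u 1 m)
          / (G ((m:ℚ)+(u:ℚ)+1/2) (m+1) 0 * (G ((k:ℚ)+(m:ℚ)+(u:ℚ)+1/2) k 0 * G ((u:ℚ)-1/2) L 0)))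
        * ((-1:ℚ)^s * (m.choose s : ℚ) * Q.eval (s:ℚ)) := by
    intro s hs
    rw [Finset.mem_range] at hs
    have E := main s (by omega)
    rw [hgc s, hQev s]
    have hid : algebraMap ℚ ℚ ((-1)^s * (m.choose s : ℚ)
          / (G ((m:ℚ)+(u:ℚ)+1/2) (m+1) s / ((m+1).factorial : ℚ)))
        = (-1)^s * (m.choose s : ℚ)
          / (G ((m:ℚ)+(u:ℚ)+1/2) (m+1) s / ((m+1).factorial : ℚ)) := by
      rw [eq_ratCast (algebraMap ℚ ℚ), Rat.cast_id]
    rw [hid]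
    rw [div_div_eq_mul_div, div_mul_eq_mul_div, div_mul_eq_mul_div, div_mul_eq_mul_div,
      div_eq_div_iff (hD s) (mul_ne_zero (hD 0) (mul_ne_zero (hq1 0) (hq2 0)))]
    linear_combination ((-1:ℚ)^s * (m.choose s : ℚ) * ((m+1).factorial : ℚ)) * E
  rw [Finset.sum_congr rfl key, ← Finset.mul_sum, altsum' m Q hdeg, mul_zero]
end

section
/- For natural numbers m, k, v, the functions Φ_{m,k,v}(y, z) = Σ_{t=0}^{m} C(m,t) C(m, k-t) · [P(y, v+m)/P(y, v+t)] · [P(z, v+m+t)/P(z, v+k)] satisfy the recurrence Φ_{m,k,v+1} - Φ_{m,k,v} + (k+1)(2v+k+m+2) Φ_{m,k+1,v} = 0. -/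
open Finset

def cf (m k t : ℕ) : ℤ :=
  (m.choose t : ℤ) * (if t ≤ k then (m.choose (k - t) : ℤ) else 0)

section PR
variable {R : Type*} [CommRing R]

lemma Pratio_shift (y : R) (v lo hi : ℕ) :
    Pratio y (v+1) lo hi = Pratio y v (lo+1) (hi+1) := by
  unfold Pratio
  rw [← map_add_right_Icc lo hi 1, Finset.prod_map]
  refine Finset.prod_congr rfl fun j hj => ?_
  simp only [addRightEmbedding_apply]
  push_cast; ring

lemma Pratio_empty (y : R) {v lo hi : ℕ} (h : hi < lo) : Pratio y v lo hi = 1 := by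
  unfold Pratio
  rw [Finset.Icc_eq_empty (by omega), Finset.prod_empty]

lemma Pratio_prepend (y : R) {v lo hi : ℕ} (h : lo ≤ hi) :
    Pratio y v lo hi = (y^2 - ((v + lo : ℕ) : R)^2) * Pratio y v (lo+1) hi := by
  unfold Pratio
  rw [Finset.Icc_add_one_left_eq_Ioc, ← Finset.Ioc_insert_left h, Finset.prod_insert Finset.left_notMem_Ioc]

lemma Pratio_append (y : R) {v lo hi : ℕ} (h : lo ≤ hi + 1) :
    Pratio y v lo (hi+1) = Pratio y v lo hi * (y^2 - ((v + (hi+1) : ℕ) : R)^2) := by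
  unfold Pratio
  rw [Finset.prod_Icc_succ_top h]

lemma cf_eq_zero {m k t : ℕ} (h : m + t < k) : cf m k t = 0 := by
  unfold cf
  split_ifs with h'
  · rw [Nat.choose_eq_zero_of_lt (show m < k - t by omega)]; ring
  · ring

lemma choose_cast_succ (m s : ℕ) :
    ((m.choose (s+1) : ℤ)) * ((s:ℤ)+1) = (m.choose s : ℤ) * ((m:ℤ) - s) := by
  rcases le_or_gt s m with h | h
  · have h3 := Nat.choose_succ_right_eq m s
    have h4 : ((m.choose (s+1) : ℤ)) * ((s:ℤ)+1) = ((m.choose s : ℤ)) * ((m - s : ℕ) : ℤ) := by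
      exact_mod_cast congrArg (Nat.cast : ℕ → ℤ) h3
    rw [h4, Nat.cast_sub h]
  · rw [Nat.choose_eq_zero_of_lt h, Nat.choose_eq_zero_of_lt (by omega)]; ring

lemma scalarZ0 (m k v : ℕ) :
    ((k:ℤ)+1) * (2*v+k+m+2) * cf m (k+1) 0
      - cf m k 0 * ((m:ℤ) + 0 - k) * (2*v+m+0+k+2) = 0 := by
  unfold cf
  simp only [Nat.zero_le, if_pos, Nat.sub_zero, Nat.choose_zero_right]
  have h2 := choose_cast_succ m k
  push_cast at h2 ⊢
  linear_combination ((2*(v:ℤ)+k+m+2)) * h2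

lemma scalarZS (m k v s : ℕ) :
    ((k:ℤ)+1) * (2*v+k+m+2) * cf m (k+1) (s+1)
      - cf m k (s+1) * ((m:ℤ) + (s+1) - k) * (2*v+m+(s+1)+k+2)
    = cf m k s * ((m:ℤ) - s) * (2*v+s+m+2) := by
  unfold cf
  rcases lt_or_ge k s with h | h
  · rw [if_neg (by omega), if_neg (by omega), if_neg (by omega)]; ring
  · rw [if_pos (show s+1 ≤ k+1 by omega), if_pos h,
      show k + 1 - (s + 1) = k - s by omega]
    have F1 := choose_cast_succ m s
    rcases eq_or_lt_of_le h with h' | h'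
    · rw [if_neg (by omega)]
      subst h'
      simp only [Nat.sub_self, Nat.choose_zero_right]
      push_cast
      linear_combination ((2*(v:ℤ)+s+m+2)) * F1
    · rw [if_pos (by omega), show k - (s+1) = (k - s - 1) by omega,
        show k - s = (k - s - 1) + 1 by omega]
      have F2 := choose_cast_succ m (k - s - 1)
      rw [show ((k - s - 1 : ℕ) : ℤ) = (k:ℤ) - s - 1 by omega] at F2
      push_cast
      linear_combination ((m.choose (k-s-1+1) : ℤ) * (2*(v:ℤ)+s+m+2)) * F1
        + ((m.choose (s+1) : ℤ) * (2*(v:ℤ)+m+s+1+k+2)) * F2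

def gfun (m k v : ℕ) (y z : R) : ℕ → R
  | 0 => 0
  | (t+1) => ((cf m k t : ℤ) : R) * ((m:R) - (t:R)) * (2*(v:R) + (t:R) + (m:R) + 2)
      * Pratio y v (t+2) m * Pratio z v (k+1) (m+t+1)

lemma perterm (m k v t : ℕ) (ht : t ≤ m) (y z : R) :
    (z^2 - ((v+k+1:ℕ):R)^2) *
      (((cf m k t : ℤ):R) * Pratio y (v+1) (t+1) m * Pratio z (v+1) (k+1) (m+t)
        - ((cf m k t : ℤ):R) * Pratio y v (t+1) m * Pratio z v (k+1) (m+t)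
        + ((k:R)+1) * (2*(v:R)+(k:R)+(m:R)+2) * ((cf m (k+1) t : ℤ):R)
            * Pratio y v (t+1) m * Pratio z v (k+2) (m+t))
    = gfun m k v y z t - gfun m k v y z (t+1) := by
  rw [Pratio_shift, Pratio_shift]
  simp only [show k+1+1 = k+2 from rfl, show t+1+1 = t+2 from rfl]
  cases t with
  | zero =>
    simp only [gfun, show (0:ℕ)+2 = 2 from rfl, show (0:ℕ)+1 = 1 from rfl,
      show m+0 = m from rfl, show m+0+1 = m+1 from rfl]
    rcases lt_trichotomy m k with hc | hc | hc
    · -- m < k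
      rw [cf_eq_zero (show m + 0 < k by omega), cf_eq_zero (show m + 0 < k+1 by omega)]
      push_cast; ring
    · -- m = k
      rw [cf_eq_zero (show m + 0 < k+1 by omega),
        Pratio_empty z (show m < k+1 by omega),
        Pratio_empty z (show m+1 < k+2 by omega),
        show Pratio z v (k+1) (m+1) = (z^2 - ((v+(k+1):ℕ):R)^2) from by
          rw [show m+1 = k+1 from by omega, Pratio_prepend z (le_refl (k+1)),
            Pratio_empty z (Nat.lt_succ_self _), mul_one]]
      rcases Nat.eq_zero_or_pos m with hm | hm
      · subst hm
        rw [Pratio_empty y (show 1 < 2 by omega), Pratio_empty y (show 0 < 1 by omega),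
          Pratio_empty y (show 0 < 2 by omega)]
        push_cast; ring
      · rw [Pratio_append y (show 2 ≤ m+1 by omega),
          Pratio_prepend y (show 1 ≤ m by omega)]
        push_cast; ring
    · -- k < m
      have hsZ := scalarZ0 m k v
      have hs := congrArg (fun x : ℤ => (x : R)) hsZ
      push_cast at hs
      rw [Pratio_prepend z (show k+1 ≤ m by omega),
        Pratio_append z (show k+2 ≤ m+1 by omega),
        show Pratio z v (k+1) (m+1)
            = (z^2 - ((v+(k+1):ℕ):R)^2) * (Pratio z v (k+2) m * (z^2 - ((v+(m+1):ℕ):R)^2)) from by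
          rw [Pratio_prepend z (show k+1 ≤ m+1 by omega)]
          simp only [show k+1+1 = k+2 from rfl]
          rw [Pratio_append z (show k+2 ≤ m+1 by omega)],
        Pratio_append y (show 2 ≤ m+1 by omega),
        Pratio_prepend y (show 1 ≤ m by omega)]
      push_cast
      linear_combination ((z^2 - ((v:R)+k+1)^2) * Pratio y v 2 m * Pratio z v (k+2) m
        * (y^2 - ((v:R)+1)^2)) * hs
  | succ s =>
    simp only [gfun, show s+1+1 = s+2 from rfl, show s+1+2 = s+3 from rfl,
      show m+(s+1) = m+s+1 from rfl, show m+(s+1)+1 = m+s+2 from rfl,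
      show m+s+1+1 = m+s+2 from rfl]
    rcases lt_trichotomy (m+s+1) k with hc | hc | hc
    · -- m + s + 1 < k
      rw [cf_eq_zero (show m + (s+1) < k by omega), cf_eq_zero (show m + (s+1) < k+1 by omega),
        cf_eq_zero (show m + s < k by omega)]
      push_cast; ring
    · -- m + s + 1 = k
      rw [cf_eq_zero (show m + (s+1) < k+1 by omega), cf_eq_zero (show m + s < k by omega),
        Pratio_empty z (show m+s+1 < k+1 by omega),
        Pratio_empty z (show m+s+2 < k+2 by omega),
        show Pratio z v (k+1) (m+s+2) = (z^2 - ((v+(k+1):ℕ):R)^2) from by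
          rw [show m+s+2 = k+1 from by omega, Pratio_prepend z (le_refl (k+1)),
            Pratio_empty z (Nat.lt_succ_self _), mul_one]]
      rcases eq_or_lt_of_le ht with hm | hm
      · -- s + 1 = m
        have hmr : ((s:R)+1) = (m:R) := by
          have : ((s+1 : ℕ) : R) = ((m:ℕ) : R) := by rw [hm]
          push_cast at this; exact this
        rw [Pratio_empty y (show m+1 < s+3 by omega),
          Pratio_empty y (show m < s+2 by omega),
          Pratio_empty y (show m < s+3 by omega)]
        push_cast
        linear_combination (-(((cf m k (s+1) : ℤ):R)) * (2*(v:R)+(s:R)+1+(m:R)+2)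
          * (z^2 - ((v:R)+k+1)^2)) * hmr
      · -- s + 1 < m
        rw [Pratio_append y (show s+3 ≤ m+1 by omega),
          Pratio_prepend y (show s+2 ≤ m by omega)]
        push_cast; ring
    · -- k < m + s + 1
      have hsZ := scalarZS m k v s
      have hs := congrArg (fun x : ℤ => (x : R)) hsZ
      push_cast at hs
      rw [Pratio_prepend z (show k+1 ≤ m+s+1 by omega),
        Pratio_append z (show k+2 ≤ m+s+2 by omega),
        show Pratio z v (k+1) (m+s+2)
            = (z^2 - ((v+(k+1):ℕ):R)^2)
              * (Pratio z v (k+2) (m+s+1) * (z^2 - ((v+(m+s+2):ℕ):R)^2)) from by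
          rw [Pratio_prepend z (show k+1 ≤ m+s+2 by omega)]
          simp only [show k+1+1 = k+2 from rfl]
          rw [Pratio_append z (show k+2 ≤ m+s+2 by omega)]]
      rcases eq_or_lt_of_le ht with hm | hm
      · -- s + 1 = m
        have hmr : ((s:R)+1) = (m:R) := by
          have : ((s+1 : ℕ) : R) = ((m:ℕ) : R) := by rw [hm]
          push_cast at this; exact this
        rw [Pratio_empty y (show m+1 < s+3 by omega),
          Pratio_empty y (show m < s+2 by omega),
          Pratio_empty y (show m < s+3 by omega)]
        push_cast
        linear_combination ((z^2 - ((v:R)+k+1)^2) * Pratio z v (k+2) (m+s+1)) * hs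
          + (-(((cf m k (s+1) : ℤ):R)) * (2*(v:R)+(s:R)+1+(m:R)+2)
              * (z^2 - ((v:R)+k+1)^2) * Pratio z v (k+2) (m+s+1)
              * (z^2 - ((v:R)+(m:R)+(s:R)+2)^2)) * hmr
      · -- s + 1 < m
        rw [Pratio_append y (show s+3 ≤ m+1 by omega),
          Pratio_prepend y (show s+2 ≤ m by omega)]
        push_cast
        linear_combination ((z^2 - ((v:R)+k+1)^2) * Pratio y v (s+3) m
          * Pratio z v (k+2) (m+s+1) * (y^2 - ((v:R)+(s:R)+2)^2)) * hs

lemma key (m k v : ℕ) (y z : R) :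
    (z^2 - ((v+k+1:ℕ):R)^2) *
      (Phi m k (v+1) y z - Phi m k v y z
        + ((k:R)+1) * (2*(v:R)+(k:R)+(m:R)+2) * Phi m (k+1) v y z) = 0 := by
  have hcoef : ∀ K t : ℕ, ((m.choose t : R) * (if t ≤ K then (m.choose (K - t) : R) else 0))
      = ((cf m K t : ℤ) : R) := by
    intro K t
    unfold cf
    split_ifs <;> push_cast <;> ring
  unfold Phi
  rw [← Finset.sum_sub_distrib, Finset.mul_sum, ← Finset.sum_add_distrib, Finset.mul_sum]
  have htel : (∑ t ∈ Finset.range (m+1), (gfun m k v y z t - gfun m k v y z (t+1))) = 0 := by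
    rw [Finset.sum_range_sub' (gfun m k v y z) (m+1)]
    simp only [gfun]
    push_cast
    ring
  refine Eq.trans (Finset.sum_congr rfl fun t htm => ?_) htel
  simp only [show k+1+1 = k+2 from rfl]
  rw [hcoef k t, hcoef (k+1) t]
  linear_combination perterm m k v t (Nat.lt_succ_iff.mp (Finset.mem_range.mp htm)) y z

lemma Phi_eval (m k v : ℕ) (y z : ℚ) :
    Polynomial.eval z (Phi m k v (Polynomial.C y) Polynomial.X) = Phi m k v y z := by
  unfold Phi Pratio
  simp [Polynomial.eval_finset_sum, Polynomial.eval_prod, apply_ite (Polynomial.eval z)]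

/-- recurrence for Φ_{m,k,v}. -/
theorem statement7 (m k v : ℕ) (y z : ℚ) :
    Phi m k (v+1) y z - Phi m k v y z
      + ((k:ℚ)+1) * (2*(v:ℚ) + k + m + 2) * Phi m (k+1) v y z = 0 := by
  have hkey := key m k v (Polynomial.C y) (Polynomial.X)
  have hb : ((Polynomial.X : Polynomial ℚ)^2 - (((v+k+1:ℕ) : Polynomial ℚ))^2) ≠ 0 := by
    have h1 : ((((v+k+1:ℕ)) : Polynomial ℚ))^2 = Polynomial.C (((v+k+1:ℕ):ℚ)^2) := by
      rw [← Polynomial.C_eq_natCast, ← map_pow]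
    rw [h1]
    exact Polynomial.X_pow_sub_C_ne_zero (by norm_num) _
  have h0 := (mul_eq_zero.mp hkey).resolve_left hb
  have h2 := congrArg (Polynomial.eval z) h0
  simp only [Polynomial.eval_add, Polynomial.eval_sub, Polynomial.eval_mul, Polynomial.eval_one,
    Polynomial.eval_natCast, Polynomial.eval_ofNat, Polynomial.eval_zero, Phi_eval] at h2
  convert h2 using 2 <;> push_cast <;> ring
end PR
end
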